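/- arXiv:1407.5061 — 3 statements merged into one kernel-verified Lean document; each statement's English description precedes it below -/
import Mathlib

section
/- For every even integer n ≥ 2, the quantity b_n := 2^{-n} * Σ_{j=0}^{n/2} C(n+1, j)/(n+1-2j) satisfies the recurrence b_n = (n/(n+1)) * b_{n-2} + a_n/(n+1), where a_n := 2^{-n} * C(n, n/2). -/
/-- `a n = binomial(n, n/2) / 2^n` as a rational number. -/
noncomputable def a (n : ℕ) : ℚ := (n.choose (n / 2) : ℚ) / 2 ^ n

/-- `b n = 2^{-n} Σ_{j=0}^{n/2} C(n+1,j)/(n+1-2j)` as a rational number. -/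
noncomputable def b (n : ℕ) : ℚ :=
  (1 / 2 ^ n) * ∑ j ∈ Finset.range (n / 2 + 1),
    ((n + 1).choose j : ℚ) / ((n : ℚ) + 1 - 2 * j)

/-!
Creative telescoping. The summand `t n j = C(n+1, j) / (n+1-2j)` of `2^n b n` satisfies
`t (n+2) j - 4(n+2)/(n+3) · t n j = G (j+1) - G j` for the rational (Wilf–Zeilberger)
certificate `G j = -j (3(n+3) - 2j) C(n+3, j) / ((n+3)² (n+3-2j))`, as both sides are rational
multiples of `C(n+3, j)`. Summing over `j ≤ n/2` telescopes to `G (n/2+1)`, which together with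
the extra top term `t (n+2) (n/2+1)` of the longer sum gives `C(n+2, n/2+1) / (n+3)`.
-/

open Finset

section CastChoose

variable {K : Type*} [Field K] [CharZero K]

theorem cast_choose_succ_right (N j : ℕ) (h : j ≤ N) :
    (N.choose (j + 1) : K) = N.choose j * (N - j) / (j + 1) := by
  have key := congrArg (Nat.cast (R := K)) (Nat.choose_succ_right_eq N j)
  push_cast [Nat.cast_sub h] at key
  rw [eq_div_iff (Nat.cast_add_one_ne_zero j), key]

theorem cast_choose_eq_choose_add_two (N j : ℕ) (h : j ≤ N) :
    (N.choose j : K) = (N + 2).choose j * ((N + 2 - j) * (N + 1 - j)) / ((N + 1) * (N + 2)) := by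
  have h₁ := congrArg (Nat.cast (R := K)) (Nat.choose_mul_succ_eq N j)
  have h₂ := congrArg (Nat.cast (R := K)) (Nat.choose_mul_succ_eq (N + 1) j)
  push_cast [Nat.cast_sub (show j ≤ N + 1 by omega), Nat.cast_sub (show j ≤ N + 1 + 1 by omega)]
    at h₁ h₂
  have hN₂ : (N + 2 : K) ≠ 0 := by exact_mod_cast (N + 1).succ_ne_zero
  rw [eq_div_iff (mul_ne_zero (Nat.cast_add_one_ne_zero N) hN₂)]
  linear_combination (N + 2 : K) * h₁ + (N + 1 - j : K) * h₂

end CastChoose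

def bTerm (n j : ℕ) : ℚ := ((n + 1).choose j : ℚ) / ((n : ℚ) + 1 - 2 * j)

theorem b_eq_sum_bTerm (n : ℕ) : b n = (∑ j ∈ range (n / 2 + 1), bTerm n j) / 2 ^ n := by
  rw [b, one_div_mul_eq_div]
  rfl

def bCert (n j : ℕ) : ℚ :=
  -(j : ℚ) * (3 * (n + 3) - 2 * j) * ((n + 3).choose j : ℚ)
    / ((n + 3) ^ 2 * ((n : ℚ) + 3 - 2 * j))

theorem bTerm_add_two_sub (n j : ℕ) (hj : 2 * j ≤ n) :
    bTerm (n + 2) j - 4 * (n + 2) / (n + 3) * bTerm n j = bCert n (j + 1) - bCert n j := by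
  have hjn : 2 * (j : ℚ) ≤ n := by exact_mod_cast hj
  have d₀ : (n : ℚ) + 3 - 2 * j ≠ 0 := by linarith
  have d₁ : (n : ℚ) + 2 + 1 - 2 * j ≠ 0 := by linarith
  have d₂ : (n : ℚ) + 1 - 2 * j ≠ 0 := by linarith
  have d₃ : (n : ℚ) + 3 - 2 * (j + 1) ≠ 0 := by linarith
  rw [bTerm, bTerm, bCert, bCert, cast_choose_eq_choose_add_two (n + 1) j (by omega),
    show n + 1 + 2 = n + 3 from rfl, cast_choose_succ_right (n + 3) j (by omega)]
  push_cast
  field_simp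
  ring

theorem sum_bTerm_add_two_sub (n m : ℕ) (hm : 2 * m ≤ n) :
    ∑ j ∈ range (m + 1), (bTerm (n + 2) j - 4 * (n + 2) / (n + 3) * bTerm n j)
      = bCert n (m + 1) := by
  rw [sum_congr rfl fun j hj => bTerm_add_two_sub n j (by grind),
    sum_range_sub, show bCert n 0 = 0 by simp [bCert], sub_zero]

theorem bCert_add_bTerm_middle (k : ℕ) :
    bCert (2 * k) (k + 1) + bTerm (2 * k + 2) (k + 1)
      = ((2 * k + 2).choose (k + 1) : ℚ) / (2 * k + 3) := by
  have h := congrArg (Nat.cast (R := ℚ)) (Nat.choose_mul_succ_eq (2 * k + 2) (k + 1))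
  rw [show 2 * k + 2 + 1 - (k + 1) = k + 2 by omega] at h
  push_cast at h
  rw [bCert, bTerm, show 2 * k + 3 = 2 * k + 2 + 1 from rfl]
  push_cast
  rw [show 2 * (k : ℚ) + 3 - 2 * (k + 1) = 1 by ring,
    show 2 * (k : ℚ) + 2 + 1 - 2 * (k + 1) = 1 by ring]
  field_simp
  linear_combination -h

theorem sum_bTerm_two_mul_add_two (k : ℕ) :
    ∑ j ∈ range (k + 2), bTerm (2 * k + 2) j
      = 4 * (2 * k + 2) / (2 * k + 3) * ∑ j ∈ range (k + 1), bTerm (2 * k) j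
        + ((2 * k + 2).choose (k + 1) : ℚ) / (2 * k + 3) := by
  have htel := sum_bTerm_add_two_sub (2 * k) k le_rfl
  rw [sum_sub_distrib, ← mul_sum] at htel
  rw [sum_range_succ, ← bCert_add_bTerm_middle]
  push_cast at htel ⊢
  linear_combination htel

theorem stmt_1 (n : ℕ) (hn : 2 ≤ n) (he : Even n) :
    b n = ((n : ℚ) / (n + 1)) * b (n - 2) + a n / (n + 1) := by
  obtain ⟨k, rfl⟩ : ∃ k, n = 2 * k + 2 := ⟨n / 2 - 1, by grind⟩
  rw [b_eq_sum_bTerm, b_eq_sum_bTerm, a, show (2 * k + 2) / 2 = k + 1 by omega,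
    show 2 * k + 2 - 2 = 2 * k by omega, show 2 * k / 2 = k by omega, sum_bTerm_two_mul_add_two]
  push_cast
  field_simp
  ring
end

section
/- For every even integer n ≥ 2, with a_n := 2^{-n} C(n, n/2) and b_n := 2^{-n} Σ_{j=0}^{n/2} C(n+1,j)/(n+1-2j), one has (n+2) a_{n+2} b_n − n a_n b_{n−2} = a_n^2. -/
open Finset

noncomputable def oddHalfSum (m : ℕ) : ℚ :=
  ∑ j ∈ range (m + 1), ((2 * m + 1).choose j : ℚ) / (2 * m + 1 - 2 * j)

lemma b_two_mul (m : ℕ) : b (2 * m) = oddHalfSum m / 2 ^ (2 * m) := by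
  rw [b, oddHalfSum, show 2 * m / 2 = m by omega]
  push_cast
  ring

lemma a_two_mul (m : ℕ) : a (2 * m) = m.centralBinom / 2 ^ (2 * m) := by
  rw [a, Nat.centralBinom_eq_two_mul_choose, show 2 * m / 2 = m by omega]

lemma add_two_mul_a_add_two {n : ℕ} (hn : Even n) : ((n : ℚ) + 2) * a (n + 2) = (n + 1) * a n := by
  obtain ⟨m, rfl⟩ := hn.two_dvd
  have h := Nat.succ_mul_centralBinom_succ m
  rw [show 2 * m + 2 = 2 * (m + 1) by ring, a_two_mul, a_two_mul]
  qify at h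
  rw [mul_add, pow_add]
  field_simp
  push_cast
  linear_combination 2 * h

noncomputable def oddHalfSumTelescoper (m t : ℕ) : ℚ :=
  -((2 * m + 1).choose t : ℚ) * t * (6 * m + 3 - 2 * t) / ((2 * m + 1) * (2 * m + 1 - 2 * t))

lemma oddHalfSum_summand_eq_sub {p j : ℕ} (hj : j ≤ p) :
    (2 * (p : ℚ) + 3) * ((2 * (p + 1) + 1).choose j / (2 * ((p : ℚ) + 1) + 1 - 2 * j))
      - 8 * ((p : ℚ) + 1) * ((2 * p + 1).choose j / (2 * (p : ℚ) + 1 - 2 * j))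
    = oddHalfSumTelescoper (p + 1) (j + 1) - oddHalfSumTelescoper (p + 1) j := by
  obtain ⟨k, rfl⟩ := Nat.exists_eq_add_of_le hj
  have h1 := Nat.choose_succ_right_eq (2 * (j + k + 1) + 1) j
  have h2 := Nat.choose_mul_succ_eq (2 * (j + k) + 1) j
  have h3 := Nat.choose_mul_succ_eq (2 * (j + k) + 2) j
  rw [show 2 * (j + k + 1) + 1 - j = j + 2 * k + 3 by omega] at h1
  rw [show 2 * (j + k) + 1 + 1 - j = j + 2 * k + 2 by omega] at h2
  rw [show 2 * (j + k) + 2 + 1 - j = j + 2 * k + 3 by omega,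
    show 2 * (j + k) + 2 + 1 = 2 * (j + k + 1) + 1 by ring] at h3
  qify at h1 h2 h3
  unfold oddHalfSumTelescoper
  push_cast
  have e1 : ((2 * (j + k + 1) + 1).choose (j + 1) : ℚ)
      = (2 * (j + k + 1) + 1).choose j * (j + 2 * k + 3) / (j + 1) := by
    rw [eq_div_iff (by positivity)]; exact_mod_cast h1
  have e2 : ((2 * (j + k + 1) + 1).choose j : ℚ)
      = (2 * (j + k) + 2).choose j * (2 * (j + k) + 3) / (j + 2 * k + 3) := by
    rw [eq_div_iff (by positivity)]; linear_combination -h3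
  have e3 : ((2 * (j + k) + 2).choose j : ℚ)
      = (2 * (j + k) + 1).choose j * (2 * (j + k) + 2) / (j + 2 * k + 2) := by
    rw [eq_div_iff (by positivity)]; linear_combination -h2
  rw [e1, e2, e3, show 2 * ((j : ℚ) + k) + 1 - 2 * j = 2 * k + 1 by ring,
    show 2 * ((j : ℚ) + k + 1) + 1 - 2 * (j + 1) = 2 * k + 1 by ring,
    show 2 * ((j : ℚ) + k + 1) + 1 - 2 * j = 2 * k + 3 by ring]
  field_simp
  ring

lemma oddHalfSum_recurrence (p : ℕ) :
    (2 * (p : ℚ) + 3) * oddHalfSum (p + 1) - 8 * ((p : ℚ) + 1) * oddHalfSum p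
      = (p + 1).centralBinom := by
  rw [oddHalfSum, oddHalfSum, sum_range_succ, mul_add, mul_sum, mul_sum, add_sub_right_comm,
    ← sum_sub_distrib]
  push_cast
  rw [sum_congr rfl fun j hj => oddHalfSum_summand_eq_sub (Nat.lt_succ_iff.mp (mem_range.mp hj)),
    sum_range_sub]
  have h := Nat.choose_mul_succ_eq (2 * p + 2) (p + 1)
  rw [show 2 * p + 2 + 1 - (p + 1) = p + 2 by omega, show 2 * p + 2 + 1 = 2 * (p + 1) + 1 by ring,
    show 2 * p + 2 = 2 * (p + 1) by ring, ← Nat.centralBinom_eq_two_mul_choose] at h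
  qify at h
  simp only [oddHalfSumTelescoper, Nat.succ_eq_add_one]
  push_cast at h ⊢
  rw [show 2 * ((p : ℚ) + 1) + 1 - 2 * (p + 1) = 1 by ring]
  field_simp
  linear_combination -h

lemma add_three_mul_b_add_two_sub {n : ℕ} (hn : Even n) :
    ((n : ℚ) + 3) * b (n + 2) - (n + 2) * b n = a (n + 2) := by
  obtain ⟨m, rfl⟩ := hn.two_dvd
  have h := oddHalfSum_recurrence m
  rw [show 2 * m + 2 = 2 * (m + 1) by ring, b_two_mul, b_two_mul, a_two_mul, mul_add, pow_add]
  field_simp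
  push_cast
  linear_combination h

theorem stmt_2 (n : ℕ) (hn : 2 ≤ n) (he : Even n) :
    ((n : ℚ) + 2) * a (n + 2) * b n - (n : ℚ) * a n * b (n - 2) = (a n) ^ 2 := by
  obtain ⟨m, rfl⟩ := Nat.exists_eq_add_of_le' hn
  have hm : Even m := (Nat.even_add.mp he).mpr even_two
  rw [Nat.add_sub_cancel]
  have ha := add_two_mul_a_add_two (hm.add even_two)
  have hb := add_three_mul_b_add_two_sub hm
  push_cast at ha hb ⊢
  linear_combination b (m + 2) * ha + a (m + 2) * hb
end

section
/- The series Σ_{k=1}^{∞} a_{2k}^2/(2k+1), with a_{2k} := 2^{-2k} C(2k,k), converges, and for N → ∞ one has Σ_{k=N+1}^{∞} a_{2k}^2/(2k+1) = 1/(π(2N+1)) + O((log N)/N^2). -/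
/-!
Write `aₙ = a2 n`. The ratio `aₙ₊₁ / aₙ = (2n+1)/(2n+2)` makes `(n + 1/4) aₙ²` increasing and
`(n + 1/4 + 1/(8n)) aₙ²` decreasing; by Wallis' product both tend to `1/π`, so
`1/(π (n + 1/4 + 1/(8n))) ≤ aₙ² ≤ 1/(π (n + 1/4))` for `n ≥ 1`. Hence the term `aₙ² / (2n+1)` lies
below the telescoping difference `1/(π(2n-1)) - 1/(π(2n+1))`, and falls short of it by at most
`1/n² - 1/(n+1)²`. Summing over `n > N` gives `1/(π(2N+1))` up to an error of `1/(N+1)²`.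
-/

/-- `a (2k) = binomial(2k, k) / 4^k` as a real number. -/
noncomputable def a2 (k : ℕ) : ℝ := ((2 * k).choose k : ℝ) / 4 ^ k

open Filter Topology Real

lemma a2_succ (n : ℕ) : a2 (n + 1) = a2 n * ((2 * n + 1) / (2 * n + 2)) := by
  have h : ((n + 1 : ℕ) : ℝ) * (2 * (n + 1)).choose (n + 1)
      = 2 * (2 * n + 1) * (2 * n).choose n := by
    exact_mod_cast Nat.succ_mul_centralBinom_succ n
  unfold a2
  field_simp
  push_cast at h ⊢
  linear_combination (2 * (4 : ℝ) ^ n) * h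

lemma inv_wallis_W_eq (n : ℕ) : (Wallis.W n)⁻¹ = (2 * n + 1) * a2 n ^ 2 := by
  induction n with
  | zero => simp [Wallis.W, a2]
  | succ n ih =>
    rw [Wallis.W_succ, mul_inv, ih, a2_succ]
    push_cast
    field_simp
    ring

lemma tendsto_mul_a2_sq :
    Tendsto (fun n : ℕ => (2 * n + 1) * a2 n ^ 2) atTop (𝓝 (2 / π)) := by
  have := Wallis.tendsto_W_nhds_pi_div_two.inv₀ (by positivity)
  simpa only [inv_wallis_W_eq, inv_div] using this

lemma tendsto_a2_sq : Tendsto (fun n : ℕ => a2 n ^ 2) atTop (𝓝 0) := by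
  have h : Tendsto (fun n : ℕ => 2 * (n : ℝ) + 1) atTop atTop :=
    tendsto_atTop_add_const_right _ _ (tendsto_natCast_atTop_atTop.const_mul_atTop two_pos)
  refine (tendsto_mul_a2_sq.div_atTop h).congr fun n => ?_
  field_simp

lemma monotone_quarter_mul_a2_sq : Monotone fun n : ℕ => (n + 1 / 4 : ℝ) * a2 n ^ 2 := by
  refine monotone_nat_of_le_succ fun n => ?_
  rw [a2_succ, mul_pow, div_pow]
  push_cast
  rw [← sub_nonneg]
  have key : ((n : ℝ) + 1 + 1 / 4) * (a2 n ^ 2 * ((2 * n + 1) ^ 2 / (2 * n + 2) ^ 2))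
      - (n + 1 / 4) * a2 n ^ 2 = a2 n ^ 2 / (4 * (2 * n + 2) ^ 2) := by
    field_simp
    ring
  rw [key]
  positivity

lemma tendsto_quarter_mul_a2_sq :
    Tendsto (fun n : ℕ => (n + 1 / 4 : ℝ) * a2 n ^ 2) atTop (𝓝 π⁻¹) := by
  have := (tendsto_mul_a2_sq.div_const 2).sub (tendsto_a2_sq.div_const 4)
  rw [zero_div, sub_zero, div_div, mul_comm, ← div_div, div_self two_ne_zero, one_div] at this
  exact this.congr fun n => by ring

lemma quarter_mul_a2_sq_le (n : ℕ) : (n + 1 / 4 : ℝ) * a2 n ^ 2 ≤ π⁻¹ :=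
  monotone_quarter_mul_a2_sq.ge_of_tendsto tendsto_quarter_mul_a2_sq n

lemma antitone_eighth_mul_a2_succ_sq :
    Antitone fun n : ℕ => (n + 1 + 1 / 4 + 1 / (8 * (n + 1)) : ℝ) * a2 (n + 1) ^ 2 := by
  refine antitone_nat_of_succ_le fun n => ?_
  rw [a2_succ (n + 1), mul_pow, div_pow]
  push_cast
  rw [← sub_nonneg]
  have key : ((n : ℝ) + 1 + 1 / 4 + 1 / (8 * (n + 1))) * a2 (n + 1) ^ 2
      - (n + 1 + 1 + 1 / 4 + 1 / (8 * (n + 1 + 1)))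
        * (a2 (n + 1) ^ 2 * ((2 * (n + 1) + 1) ^ 2 / (2 * (n + 1) + 2) ^ 2))
      = a2 (n + 1) ^ 2 * (6 * (n + 1) ^ 2 + 9 * (n + 1) + 4)
        / (8 * (n + 1) * (n + 2) * (2 * (n + 1) + 2) ^ 2) := by
    field_simp
    ring
  rw [key]
  positivity

lemma tendsto_eighth_mul_a2_succ_sq :
    Tendsto (fun n : ℕ => (n + 1 + 1 / 4 + 1 / (8 * (n + 1)) : ℝ) * a2 (n + 1) ^ 2) atTop
      (𝓝 π⁻¹) := by
  have h8 : Tendsto (fun n : ℕ => 8 * ((n : ℝ) + 1)) atTop atTop :=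
    (tendsto_atTop_add_const_right _ _ tendsto_natCast_atTop_atTop).const_mul_atTop (by norm_num)
  have := (tendsto_quarter_mul_a2_sq.comp (tendsto_add_atTop_nat 1)).add
    ((tendsto_a2_sq.comp (tendsto_add_atTop_nat 1)).div_atTop h8)
  rw [add_zero] at this
  refine this.congr fun n => ?_
  simp only [Function.comp_apply]
  push_cast
  ring

lemma inv_pi_le_eighth_mul_a2_succ_sq (n : ℕ) :
    π⁻¹ ≤ (n + 1 + 1 / 4 + 1 / (8 * (n + 1)) : ℝ) * a2 (n + 1) ^ 2 :=
  antitone_eighth_mul_a2_succ_sq.le_of_tendsto tendsto_eighth_mul_a2_succ_sq n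

lemma hasSum_sub_succ_of_antitone {g : ℕ → ℝ} {l : ℝ} (hg : Antitone g)
    (hl : Tendsto g atTop (𝓝 l)) : HasSum (fun n => g n - g (n + 1)) (g 0 - l) := by
  rw [hasSum_iff_tendsto_nat_of_nonneg fun n => sub_nonneg.2 (hg n.le_succ)]
  simp_rw [Finset.sum_range_sub']
  exact tendsto_const_nhds.sub hl

lemma summable_and_abs_tsum_sub_le {f u v : ℕ → ℝ} (hu : Antitone u)
    (hu₀ : Tendsto u atTop (𝓝 0)) (hv₀ : Tendsto v atTop (𝓝 0))
    (hlow : ∀ n, u n - u (n + 1) - (v n - v (n + 1)) ≤ f n)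
    (hup : ∀ n, f n ≤ u n - u (n + 1)) :
    Summable f ∧ |∑' n, f n - u 0| ≤ v 0 := by
  have hv : Antitone v := antitone_nat_of_succ_le fun n => by linarith [hlow n, hup n]
  have hU := hasSum_sub_succ_of_antitone hu hu₀
  have hV := hasSum_sub_succ_of_antitone hv hv₀
  rw [sub_zero] at hU hV
  let g n := u n - u (n + 1) - f n
  have hg_nonneg : ∀ n, 0 ≤ g n := fun n => by linarith [hup n]
  have hg_le : ∀ n, g n ≤ v n - v (n + 1) := fun n => by linarith [hlow n]
  have hg : Summable g := hV.summable.of_nonneg_of_le hg_nonneg hg_le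
  have hf : HasSum f (u 0 - ∑' n, g n) := by simpa [g] using hU.sub hg.hasSum
  refine ⟨hf.summable, ?_⟩
  rw [hf.tsum_eq, sub_sub_cancel_left, abs_neg, abs_of_nonneg (tsum_nonneg hg_nonneg),
    ← hV.tsum_eq]
  exact hg.tsum_le_tsum hg_le hV.summable

lemma summable_and_abs_tsum_add_sub_le {f u v : ℕ → ℝ} (hu : Antitone u)
    (hu₀ : Tendsto u atTop (𝓝 0)) (hv₀ : Tendsto v atTop (𝓝 0))
    (hlow : ∀ n, u n - u (n + 1) - (v n - v (n + 1)) ≤ f n)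
    (hup : ∀ n, f n ≤ u n - u (n + 1)) (N : ℕ) :
    Summable (fun n => f (n + N)) ∧ |∑' n, f (n + N) - u N| ≤ v N := by
  have hshift : Monotone fun n => n + N := fun _ _ h => Nat.add_le_add_right h N
  simpa using summable_and_abs_tsum_sub_le (hu.comp_monotone hshift)
    (hu₀.comp (tendsto_add_atTop_nat N)) (hv₀.comp (tendsto_add_atTop_nat N))
    (fun n => by simpa only [Function.comp_apply, Nat.add_right_comm n 1 N] using hlow (n + N))
    (fun n => by simpa only [Function.comp_apply, Nat.add_right_comm n 1 N] using hup (n + N))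

lemma one_div_pi_mul_sub_succ (n : ℕ) :
    1 / (π * (2 * n + 1)) - 1 / (π * (2 * (n + 1) + 1))
      = 2 / (π * ((2 * n + 1) * (2 * n + 3))) := by
  field_simp
  ring

lemma a2_succ_sq_div_le (n : ℕ) :
    a2 (n + 1) ^ 2 / (2 * (n + 1) + 1)
      ≤ 1 / (π * (2 * n + 1)) - 1 / (π * (2 * (n + 1) + 1)) := by
  have h := mul_le_mul_of_nonneg_left (quarter_mul_a2_sq_le (n + 1)) pi_pos.le
  rw [mul_inv_cancel₀ pi_ne_zero] at h
  push_cast at h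
  rw [one_div_pi_mul_sub_succ, div_le_div_iff₀ (by positivity) (by positivity)]
  nlinarith [mul_nonneg pi_pos.le (sq_nonneg (a2 (n + 1)))]

lemma le_a2_succ_sq_div (n : ℕ) :
    1 / (π * (2 * n + 1)) - 1 / (π * (2 * (n + 1) + 1))
        - (1 / (n + 1) ^ 2 - 1 / (n + 1 + 1) ^ 2)
      ≤ a2 (n + 1) ^ 2 / (2 * (n + 1) + 1) := by
  have hn : (0 : ℝ) ≤ n := n.cast_nonneg
  set q : ℝ := 8 * (n + 1) ^ 2 + 2 * (n + 1) + 1 with hq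
  have hq0 : 0 < q := by positivity
  have hx : 8 * (n + 1) / (π * q) / (2 * n + 3) ≤ a2 (n + 1) ^ 2 / (2 * (n + 1) + 1) := by
    have h := inv_pi_le_eighth_mul_a2_succ_sq n
    rw [show (n + 1 + 1 / 4 + 1 / (8 * (n + 1)) : ℝ) = q / (8 * (n + 1)) by field_simp; ring,
      inv_le_iff_one_le_mul₀ pi_pos, div_mul_eq_mul_div, div_mul_eq_mul_div,
      one_le_div (by positivity)] at h
    rw [show 2 * ((n : ℝ) + 1) + 1 = 2 * n + 3 by ring]
    gcongr
    rw [div_le_iff₀ (by positivity)]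
    linarith
  have hdiff : 2 / (π * ((2 * n + 1) * (2 * n + 3))) - 8 * (n + 1) / (π * q) / (2 * n + 3)
      = (12 * n + 14) / (π * ((2 * n + 1) * (2 * n + 3) * q)) := by
    field_simp
    ring
  have hpoly : (12 * n + 14) / (π * ((2 * n + 1) * (2 * n + 3) * q))
      ≤ 1 / (n + 1) ^ 2 - 1 / (n + 1 + 1) ^ 2 := by
    calc (12 * n + 14) / (π * ((2 * n + 1) * (2 * n + 3) * q))
        ≤ (12 * n + 14) / ((2 * n + 1) * (2 * n + 3) * q) :=
          div_le_div_of_nonneg_left (by positivity) (by positivity)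
            (le_mul_of_one_le_left (by positivity) (by linarith [pi_gt_three]))
      _ ≤ (2 * n + 3) / ((n + 1) ^ 2 * (n + 2) ^ 2) := by
          rw [div_le_div_iff₀ (by positivity) (by positivity), hq]
          nlinarith [pow_nonneg hn 2, pow_nonneg hn 3, pow_nonneg hn 4, pow_nonneg hn 5]
      _ = 1 / (n + 1) ^ 2 - 1 / (n + 1 + 1) ^ 2 := by
          field_simp
          ring
  rw [one_div_pi_mul_sub_succ]
  linarith

lemma tail_a2_sq_div (N : ℕ) :
    Summable (fun k : ℕ => a2 (k + N + 1) ^ 2 / (2 * ((k : ℝ) + N + 1) + 1)) ∧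
    |∑' k : ℕ, a2 (k + N + 1) ^ 2 / (2 * ((k : ℝ) + N + 1) + 1) - 1 / (π * (2 * N + 1))|
      ≤ 1 / (N + 1) ^ 2 := by
  have hu : Antitone fun n : ℕ => 1 / (π * (2 * (n : ℝ) + 1)) := fun _ _ hmn =>
    one_div_le_one_div_of_le (by positivity) (by gcongr)
  have hu₀ : Tendsto (fun n : ℕ => 1 / (π * (2 * (n : ℝ) + 1))) atTop (𝓝 0) :=
    tendsto_const_nhds.div_atTop <| (tendsto_atTop_add_const_right _ _
      (tendsto_natCast_atTop_atTop.const_mul_atTop two_pos)).const_mul_atTop pi_pos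
  have hv₀ : Tendsto (fun n : ℕ => 1 / ((n : ℝ) + 1) ^ 2) atTop (𝓝 0) :=
    tendsto_const_nhds.div_atTop <| (tendsto_pow_atTop two_ne_zero).comp
      (tendsto_atTop_add_const_right _ _ tendsto_natCast_atTop_atTop)
  have := summable_and_abs_tsum_add_sub_le hu hu₀ hv₀
    (fun n => by push_cast; exact le_a2_succ_sq_div n)
    (fun n => by push_cast; exact a2_succ_sq_div_le n) N
  simpa [add_assoc] using this

theorem stmt_6 :
    Summable (fun k : ℕ => (a2 k) ^ 2 / (2 * (k : ℝ) + 1)) ∧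
    ∃ C : ℝ, ∃ N₀ : ℕ, ∀ N : ℕ, N₀ ≤ N →
      |(∑' k : ℕ, (a2 (k + N + 1)) ^ 2 / (2 * ((k : ℝ) + N + 1) + 1)) -
          1 / (Real.pi * (2 * (N : ℝ) + 1))| ≤
        C * Real.log N / (N : ℝ) ^ 2 := by
  refine ⟨(summable_nat_add_iff 1).1 ?_, 1, 3, fun N hN => (tail_a2_sq_div N).2.trans ?_⟩
  · simpa using (tail_a2_sq_div 0).1
  · have hN' : (3 : ℝ) ≤ N := by exact_mod_cast hN
    have hlog : 1 ≤ log N := by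
      rw [le_log_iff_exp_le (by positivity)]
      exact (exp_one_lt_d9.trans (by norm_num)).le.trans hN'
    calc 1 / ((N : ℝ) + 1) ^ 2 ≤ 1 / N ^ 2 := by gcongr; linarith
      _ ≤ 1 * log N / N ^ 2 := by rw [one_mul]; gcongr
end
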